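/- Let G = {*x₁, …, *xₙ}:1 be a mutant flower of positive height (mex{xᵢ} > 0), and let N be any natural number strictly larger than all the xᵢ and larger than mex{xᵢ}. Then in normal play, 0 < G + *N, i.e. G + *N is a Left win under normal play. -/

import Mathlib

/-! Combinatorial games (`SetTheory.PGame`, `nim`, `Nimber`) are no longer part of Mathlib;
the definitions below restate them with their former meaning. -/

universe w

namespace SetTheory

/-- Pre-games, as formerly in Mathlib. -/
inductive PGame : Type (w + 1)
  | mk : ∀ α β : Type w, (α → PGame) → (β → PGame) → PGame

namespace PGame

def LeftMoves : PGame.{w} → Type w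
  | mk l _ _ _ => l

def RightMoves : PGame.{w} → Type w
  | mk _ r _ _ => r

def moveLeft : ∀ g : PGame.{w}, LeftMoves g → PGame.{w}
  | mk _ _ L _ => L

def moveRight : ∀ g : PGame.{w}, RightMoves g → PGame.{w}
  | mk _ _ _ R => R

inductive IsOption : PGame.{w} → PGame.{w} → Prop
  | moveLeft {x : PGame.{w}} (i : x.LeftMoves) : IsOption (x.moveLeft i) x
  | moveRight {x : PGame.{w}} (i : x.RightMoves) : IsOption (x.moveRight i) x

theorem wf_isOption : WellFounded (@IsOption.{w}) :=
  ⟨fun x => by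
    induction x with
    | mk l r L R IHl IHr =>
      refine Acc.intro _ fun y h => ?_
      cases h with
      | moveLeft i => exact IHl i
      | moveRight j => exact IHr j⟩

def Subsequent : PGame.{w} → PGame.{w} → Prop :=
  Relation.TransGen IsOption

theorem wf_subsequent : WellFounded (@Subsequent.{w}) :=
  wf_isOption.transGen

instance : WellFoundedRelation PGame.{w} :=
  ⟨_, wf_subsequent⟩

theorem Subsequent.moveLeft {x : PGame.{w}} (i : x.LeftMoves) : Subsequent (x.moveLeft i) x :=
  Relation.TransGen.single (IsOption.moveLeft i)

theorem Subsequent.moveRight {x : PGame.{w}} (j : x.RightMoves) :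
    Subsequent (x.moveRight j) x :=
  Relation.TransGen.single (IsOption.moveRight j)

/-- `(x ≤ y, x ⧏ y)`, defined by simultaneous recursion. -/
def leLF : PGame.{w} → PGame.{w} → Prop × Prop
  | mk xl xr xL xR, mk yl yr yL yR =>
    ((∀ i, (leLF (xL i) (mk yl yr yL yR)).2) ∧ ∀ j, (leLF (mk xl xr xL xR) (yR j)).2,
     (∃ i, (leLF (mk xl xr xL xR) (yL i)).1) ∨ ∃ j, (leLF (xR j) (mk yl yr yL yR)).1)
termination_by x y => (x, y)
decreasing_by
  all_goals first
    | exact Prod.Lex.left _ _ (Subsequent.moveLeft (x := mk _ _ _ _) _)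
    | exact Prod.Lex.left _ _ (Subsequent.moveRight (x := mk _ _ _ _) _)
    | exact Prod.Lex.right _ (Subsequent.moveLeft (x := mk _ _ _ _) _)
    | exact Prod.Lex.right _ (Subsequent.moveRight (x := mk _ _ _ _) _)

instance : LE PGame.{w} :=
  ⟨fun x y => (leLF x y).1⟩

instance : LT PGame.{w} :=
  ⟨fun x y => x ≤ y ∧ ¬ y ≤ x⟩

instance : Zero PGame.{w} :=
  ⟨⟨PEmpty, PEmpty, PEmpty.elim, PEmpty.elim⟩⟩

instance : One PGame.{w} :=
  ⟨⟨PUnit, PEmpty, fun _ => 0, PEmpty.elim⟩⟩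

def neg : PGame.{w} → PGame.{w}
  | mk l r L R => mk r l (fun i => neg (R i)) (fun i => neg (L i))

instance : Neg PGame.{w} :=
  ⟨neg⟩

def add : PGame.{w} → PGame.{w} → PGame.{w}
  | mk xl xr xL xR, mk yl yr yL yR =>
    mk (xl ⊕ yl) (xr ⊕ yr)
      (Sum.elim (fun i => add (xL i) (mk yl yr yL yR)) (fun i => add (mk xl xr xL xR) (yL i)))
      (Sum.elim (fun i => add (xR i) (mk yl yr yL yR)) (fun i => add (mk xl xr xL xR) (yR i)))
termination_by x y => (x, y)
decreasing_by
  all_goals first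
    | exact Prod.Lex.left _ _ (Subsequent.moveLeft (x := mk _ _ _ _) _)
    | exact Prod.Lex.left _ _ (Subsequent.moveRight (x := mk _ _ _ _) _)
    | exact Prod.Lex.right _ (Subsequent.moveLeft (x := mk _ _ _ _) _)
    | exact Prod.Lex.right _ (Subsequent.moveRight (x := mk _ _ _ _) _)

instance : Add PGame.{w} :=
  ⟨add⟩

instance : Sub PGame.{w} :=
  ⟨fun x y => x + -y⟩

/-- The game `* = {0 | 0}`. -/
def star : PGame.{w} :=
  ⟨PUnit, PUnit, fun _ => 0, fun _ => 0⟩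

/-- The nim-heap `*o` of ordinal size `o`. -/
noncomputable def nim (o : Ordinal.{w}) : PGame.{w} :=
  ⟨o.ToType, o.ToType,
    fun x => nim (Ordinal.ToType.mk.symm x).val,
    fun x => nim (Ordinal.ToType.mk.symm x).val⟩
termination_by o
decreasing_by all_goals exact (Ordinal.ToType.mk.symm x).prop

end PGame

end SetTheory

/-- Nimbers, as formerly in Mathlib: a type synonym of the ordinals. -/
def Nimber : Type (w + 1) := Ordinal.{w}

noncomputable instance : ConditionallyCompleteLinearOrderBot Nimber.{w} :=
  inferInstanceAs (ConditionallyCompleteLinearOrderBot Ordinal.{w})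

instance : One Nimber.{w} :=
  inferInstanceAs (One Ordinal.{w})

open SetTheory PGame

universe u

/-- The four outcome classes of a combinatorial game. -/
inductive Outcome : Type
  | L | N | P | R
deriving DecidableEq

/-- The partial order on outcomes: `R` least, `L` greatest, `N` and `P` incomparable. -/
def Outcome.leB : Outcome → Outcome → Bool
  | .R, _ => true
  | _, .L => true
  | .N, .N => true
  | .P, .P => true
  | _, _ => false

instance : PartialOrder Outcome where
  le a b := Outcome.leB a b = true
  le_refl a := by cases a <;> rfl
  le_trans a b c := by cases a <;> cases b <;> cases c <;> simp [Outcome.leB]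
  le_antisymm a b := by cases a <;> cases b <;> simp [Outcome.leB]

/-- `misereWins true G` : Left, moving first, wins `G` under misère play;
`misereWins false G` : Right, moving first, wins `G` under misère play.
(Under misère play, a player who cannot move wins.) -/
def misereWins : Bool → SetTheory.PGame.{u} → Prop
  | true, G => IsEmpty G.LeftMoves ∨ ∃ i, ¬ misereWins false (G.moveLeft i)
  | false, G => IsEmpty G.RightMoves ∨ ∃ j, ¬ misereWins true (G.moveRight j)
termination_by _ G => G
decreasing_by all_goals first | exact Subsequent.moveLeft _ | exact Subsequent.moveRight _

/-- Build an outcome class from the propositions "Left moving first wins" and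
"Right moving first wins". -/
noncomputable def outcomeOf (LF RF : Prop) : Outcome := by
  classical exact if LF then (if RF then .N else .L) else (if RF then .R else .P)

/-- The normal-play outcome `o⁺(G)` of a game. -/
noncomputable def normalOutcome (G : PGame) : Outcome :=
  outcomeOf (¬ G ≤ 0) (¬ 0 ≤ G)

/-- The misère-play outcome `o⁻(G)` of a game. -/
noncomputable def misereOutcome (G : PGame) : Outcome :=
  outcomeOf (misereWins true G) (misereWins false G)

/-- The ordinal sum `G : H` of two games: either move in `G` (destroying the `H` part),
or move in `H` keeping the base `G`. -/
def ordinalSum (G : PGame.{u}) : PGame.{u} → PGame.{u}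
  | H => PGame.mk (G.LeftMoves ⊕ H.LeftMoves) (G.RightMoves ⊕ H.RightMoves)
      (Sum.elim G.moveLeft fun i => ordinalSum G (H.moveLeft i))
      (Sum.elim G.moveRight fun j => ordinalSum G (H.moveRight j))
termination_by H => H
decreasing_by all_goals first | exact Subsequent.moveLeft _ | exact Subsequent.moveRight _

/-- The game `↑` (up) `= {0 | *}`. -/
def up : PGame.{u} := ⟨PUnit, PUnit, fun _ => 0, fun _ => star⟩

/-- `n` copies of `↑` added together. -/
def nUp : ℕ → PGame.{u}
  | 0 => 0
  | n + 1 => nUp n + up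

/-- The integer multiple `w·↑`. -/
def upMul : ℤ → PGame.{u}
  | .ofNat k => nUp k
  | .negSucc k => -(nUp (k + 1))

/-- Finite disjunctive sum of a family of games. -/
def psum : {k : ℕ} → (Fin k → PGame.{u}) → PGame.{u}
  | 0, _ => 0
  | k + 1, f => psum (fun i : Fin k => f i.castSucc) + f (Fin.last k)

/-- The superstar `{*x₁, …, *xₙ}`: the impartial game whose Left and Right options are
exactly the nimbers `*xᵢ`. -/
noncomputable def superstar {n : ℕ} (x : Fin n → ℕ) : PGame :=
  ⟨Fin n, Fin n, fun i => nim (x i), fun i => nim (x i)⟩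

/-- The minimum excludant of a set of naturals. -/
noncomputable def setMex (S : Set ℕ) : ℕ := sInf {n | n ∉ S}

/-- Iterated XOR (nim-sum) of a finite family of naturals. -/
def xorSum : {k : ℕ} → (Fin k → ℕ) → ℕ
  | 0, _ => 0
  | k + 1, f => xorSum (fun i : Fin k => f i.castSucc) ^^^ f (Fin.last k)

/-- A set of naturals is star-closed if it is closed under XOR with 1. -/
def StarClosedN (S : Set ℕ) : Prop := ∀ a ∈ S, a ^^^ 1 ∈ S

/-- `G` is all-small (dicotic): in every subposition, either both players can move
or neither can. -/
def AllSmall (G : PGame) : Prop :=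
  (Nonempty G.LeftMoves ↔ Nonempty G.RightMoves) ∧
    ∀ p, Subsequent p G → (Nonempty p.LeftMoves ↔ Nonempty p.RightMoves)

/-- `G` has (integer) atomic weight `w`, via the remote-star characterization:
for all sufficiently remote `N`, `*N + ↓ < G - w·↑ < *N + ↑`. -/
def HasIntAtomicWeight (G : PGame) (w : ℤ) : Prop :=
  ∃ N₀ : ℕ, ∀ N : ℕ, N₀ ≤ N →
    nim N + (-up) < G - upMul w ∧ G - upMul w < nim N + up

open Classical in
/-- The misère Grundy value of an (impartial) game: the mex of the misère Grundy values
of its options, except that the empty game has misère Grundy value `1`. -/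
noncomputable def misereGrundy : PGame.{u} → Nimber.{u}
  | G =>
    if IsEmpty G.LeftMoves then 1
    else sInf (Set.range fun i => misereGrundy (G.moveLeft i))ᶜ
termination_by G => G
decreasing_by all_goals first | exact Subsequent.moveLeft _ | exact Subsequent.moveRight _

/-- A set of games closed under disjunctive sum and under taking subpositions. -/
def SClosed (A : Set PGame) : Prop :=
  (∀ G ∈ A, ∀ H ∈ A, G + H ∈ A) ∧ ∀ G ∈ A, ∀ G', Subsequent G' G → G' ∈ A

/-- `K` is an evil kernel of `A`: setting `G* = G` for `G ∈ K` and `G* = G + *` otherwise,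
one has `o⁺(G) = o⁻(G*)` and `o⁻(G) = o⁺(G*)` for all `G ∈ A`. -/
def IsEvilKernel (A K : Set PGame) : Prop :=
  K ⊆ A ∧ ∀ G ∈ A,
    (G ∈ K → normalOutcome G = misereOutcome G ∧ misereOutcome G = normalOutcome G) ∧
    (G ∉ K → normalOutcome G = misereOutcome (G + star) ∧
      misereOutcome G = normalOutcome (G + star))

/-- `(A, K)` is evilly normal: `A` is closed, `K` is an evil kernel of `A`, and
`G + H ∉ K ↔ (G ∉ K ∧ H ∉ K)` for all `G, H ∈ A`. -/
def EvillyNormal (A K : Set PGame) : Prop :=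
  SClosed A ∧ IsEvilKernel A K ∧ ∀ G ∈ A, ∀ H ∈ A, (G + H ∉ K ↔ G ∉ K ∧ H ∉ K)

/-- Normal-play equality of games: `G` and `H` have the same normal-play outcome in
every sum. -/
def NormalEq (G H : PGame) : Prop := ∀ X, normalOutcome (G + X) = normalOutcome (H + X)

/-- Lean's `⧏`: the second component of `leLF`. -/
def pgLF (x y : PGame.{u}) : Prop := (leLF x y).2

theorem pg_le_iff (x y : PGame.{u}) :
    x ≤ y ↔ (∀ i, pgLF (x.moveLeft i) y) ∧ ∀ j, pgLF x (y.moveRight j) := by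
  cases x; cases y
  show (leLF _ _).1 ↔ _
  rw [leLF]
  exact Iff.rfl

theorem pg_lf_iff (x y : PGame.{u}) :
    pgLF x y ↔ (∃ i, x ≤ y.moveLeft i) ∨ ∃ j, x.moveRight j ≤ y := by
  cases x; cases y
  show (leLF _ _).2 ↔ _
  rw [leLF]
  exact Iff.rfl

theorem pg_zero_le (x : PGame.{u}) : 0 ≤ x ↔ ∀ j, pgLF 0 (x.moveRight j) := by
  rw [pg_le_iff]
  exact ⟨fun h => h.2, fun h => ⟨fun i => PEmpty.elim i, h⟩⟩

theorem pg_zero_lf (x : PGame.{u}) : pgLF 0 x ↔ ∃ i, 0 ≤ x.moveLeft i := by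
  rw [pg_lf_iff]
  exact ⟨fun h => h.elim id (fun ⟨j, _⟩ => PEmpty.elim j), Or.inl⟩

theorem pg_lf_not_le (x y : PGame.{u}) : (pgLF x y → ¬ y ≤ x) ∧ (pgLF y x → ¬ x ≤ y) := by
  induction x generalizing y with
  | mk xl xr xL xR IHxl IHxr =>
  induction y with
  | mk yl yr yL yR IHyl IHyr =>
  constructor
  · intro h1 h2
    rw [pg_lf_iff] at h1; rw [pg_le_iff] at h2
    rcases h1 with ⟨i, hi⟩ | ⟨j, hj⟩
    · exact (IHyl i).2 (h2.1 i) hi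
    · exact (IHxr j (mk yl yr yL yR)).2 (h2.2 j) hj
  · intro h1 h2
    rw [pg_lf_iff] at h1; rw [pg_le_iff] at h2
    rcases h1 with ⟨i, hi⟩ | ⟨j, hj⟩
    · exact (IHxl i (mk yl yr yL yR)).1 (h2.1 i) hi
    · exact (IHyr j).1 (h2.2 j) hj

theorem pg_moveRight_of_eq {g : PGame.{u}} {l r : Type u} {L : l → PGame.{u}} {R : r → PGame.{u}}
    (h : g = mk l r L R) (j : g.RightMoves) : ∃ j', g.moveRight j = R j' := by
  subst h; exact ⟨j, rfl⟩

theorem pg_moveLeft_of_eq {g : PGame.{u}} {l r : Type u} {L : l → PGame.{u}} {R : r → PGame.{u}}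
    (h : g = mk l r L R) (i : l) : ∃ i', g.moveLeft i' = L i := by
  subst h; exact ⟨i, rfl⟩

theorem pg_nim_def (o : Ordinal.{u}) : nim o = mk o.ToType o.ToType
    (fun x => nim (Ordinal.ToType.mk.symm x).val) (fun x => nim (Ordinal.ToType.mk.symm x).val) := by
  rw [nim]

theorem pg_nim_moveRight (o : Ordinal.{u}) (j : (nim o).RightMoves) :
    ∃ b < o, (nim o).moveRight j = nim b := by
  obtain ⟨j', hj'⟩ := pg_moveRight_of_eq (pg_nim_def o) j
  exact ⟨_, (Ordinal.ToType.mk.symm j').prop, hj'⟩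

theorem pg_nim_moveLeft (o b : Ordinal.{u}) (hb : b < o) : ∃ i, (nim o).moveLeft i = nim b := by
  obtain ⟨i, hi⟩ := pg_moveLeft_of_eq (pg_nim_def o) (Ordinal.ToType.mk ⟨b, hb⟩)
  exact ⟨i, by rw [hi]; simp⟩

theorem pg_add_def {xl xr yl yr : Type u} (xL : xl → PGame.{u}) (xR : xr → PGame.{u})
    (yL : yl → PGame.{u}) (yR : yr → PGame.{u}) :
    mk xl xr xL xR + mk yl yr yL yR = mk (xl ⊕ yl) (xr ⊕ yr)
      (Sum.elim (fun i => xL i + mk yl yr yL yR) (fun i => mk xl xr xL xR + yL i))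
      (Sum.elim (fun i => xR i + mk yl yr yL yR) (fun i => mk xl xr xL xR + yR i)) := by
  show add _ _ = _
  rw [add]
  rfl

theorem pg_add_moveRight_cases (x y : PGame.{u}) (k : (x + y).RightMoves) :
    (∃ j, (x + y).moveRight k = x.moveRight j + y) ∨
      ∃ j, (x + y).moveRight k = x + y.moveRight j := by
  cases x; cases y
  obtain ⟨j', hj'⟩ := pg_moveRight_of_eq (pg_add_def _ _ _ _) k
  rw [hj']
  rcases j' with j | j
  · exact Or.inl ⟨j, rfl⟩
  · exact Or.inr ⟨j, rfl⟩

theorem pg_add_moveLeft_inl (x y : PGame.{u}) (i : x.LeftMoves) :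
    ∃ k, (x + y).moveLeft k = x.moveLeft i + y := by
  cases x; cases y
  obtain ⟨k, hk⟩ := pg_moveLeft_of_eq (pg_add_def _ _ _ _) (Sum.inl i)
  exact ⟨k, hk⟩

theorem pg_add_moveLeft_inr (x y : PGame.{u}) (i : y.LeftMoves) :
    ∃ k, (x + y).moveLeft k = x + y.moveLeft i := by
  cases x; cases y
  obtain ⟨k, hk⟩ := pg_moveLeft_of_eq (pg_add_def _ _ _ _) (Sum.inr i)
  exact ⟨k, hk⟩

theorem nim_pair_le (a : Ordinal.{u}) : 0 ≤ nim a + nim a := by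
  induction a using Ordinal.induction with
  | h a IH =>
  rw [pg_zero_le]
  intro k
  rw [pg_zero_lf]
  rcases pg_add_moveRight_cases _ _ k with ⟨j, hj⟩ | ⟨j, hj⟩
  · obtain ⟨b, hb, hjb⟩ := pg_nim_moveRight a j
    obtain ⟨i, hi⟩ := pg_nim_moveLeft a b hb
    obtain ⟨k', hk'⟩ := pg_add_moveLeft_inr (nim b) (nim a) i
    rw [hj, hjb]
    exact ⟨k', by rw [hk', hi]; exact IH b hb⟩
  · obtain ⟨b, hb, hjb⟩ := pg_nim_moveRight a j
    obtain ⟨i, hi⟩ := pg_nim_moveLeft a b hb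
    obtain ⟨k', hk'⟩ := pg_add_moveLeft_inl (nim a) (nim b) i
    rw [hj, hjb]
    exact ⟨k', by rw [hk', hi]; exact IH b hb⟩

theorem nim_pair_lf {a b : ℕ} (hab : a ≠ b) :
    pgLF 0 (nim.{u} (a : Ordinal) + nim (b : Ordinal)) := by
  rw [pg_zero_lf]
  rcases lt_or_gt_of_ne hab with h | h
  · obtain ⟨i, hi⟩ := pg_nim_moveLeft (b : Ordinal.{u}) a (by exact_mod_cast h)
    obtain ⟨k, hk⟩ := pg_add_moveLeft_inr (nim (a : Ordinal.{u})) (nim (b : Ordinal.{u})) i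
    exact ⟨k, by rw [hk, hi]; exact nim_pair_le _⟩
  · obtain ⟨i, hi⟩ := pg_nim_moveLeft (a : Ordinal.{u}) b (by exact_mod_cast h)
    obtain ⟨k, hk⟩ := pg_add_moveLeft_inl (nim (a : Ordinal.{u})) (nim (b : Ordinal.{u})) i
    exact ⟨k, by rw [hk, hi]; exact nim_pair_le _⟩

theorem nim_nat_moveRight (N : ℕ) (j : (nim.{u} (N : Ordinal)).RightMoves) :
    ∃ m : ℕ, m < N ∧ (nim (N : Ordinal)).moveRight j = nim (m : Ordinal) := by
  obtain ⟨b, hb, hbj⟩ := pg_nim_moveRight (N : Ordinal.{u}) j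
  obtain ⟨m, rfl⟩ := Ordinal.lt_omega0.1 (hb.trans (Ordinal.nat_lt_omega0 N))
  exact ⟨m, by exact_mod_cast hb, hbj⟩

/-- for a mutant flower `G = {*x₁,…,*xₙ}:1` of positive height and any
`N` larger than every `xᵢ` and than `mex{xᵢ}`, the game `G + *N` is a Left win in
normal play: `0 < G + *N`. -/
theorem mutantFlower_add_bigNim_pos (n : ℕ) (x : Fin n → ℕ)
    (hx : 0 < setMex (Set.range x)) (N : ℕ)
    (hN₁ : ∀ i, x i < N) (hN₂ : setMex (Set.range x) < N) :
    0 < ordinalSum (superstar x) 1 + nim (N : Ordinal) := by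
  classical
  set m₀ := setMex (Set.range x) with hm₀def
  have hm₀_not : m₀ ∉ Set.range x :=
    Nat.sInf_mem ((Set.finite_range x).infinite_compl).nonempty
  have hm₀_mem : ∀ k : ℕ, k < m₀ → k ∈ Set.range x := by
    intro k hk
    by_contra h
    exact absurd (Nat.sInf_le h) (not_le.2 hk)
  have hG : ordinalSum (superstar x) 1 =
      PGame.mk (Fin n ⊕ (1 : PGame).LeftMoves) (Fin n ⊕ (1 : PGame).RightMoves)
        (Sum.elim (fun i => nim (x i))
          (fun i => ordinalSum (superstar x) ((1 : PGame).moveLeft i)))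
        (Sum.elim (fun i => nim (x i))
          (fun j => ordinalSum (superstar x) ((1 : PGame).moveRight j))) := by
    rw [ordinalSum]; rfl
  have hS0 : ordinalSum (superstar x) 0 =
      PGame.mk (Fin n ⊕ (0 : PGame).LeftMoves) (Fin n ⊕ (0 : PGame).RightMoves)
        (Sum.elim (fun i => nim (x i))
          (fun i => ordinalSum (superstar x) ((0 : PGame).moveLeft i)))
        (Sum.elim (fun i => nim (x i))
          (fun j => ordinalSum (superstar x) ((0 : PGame).moveRight j))) := by
    rw [ordinalSum]; rfl
  -- Step 1 : 0 ≤ (S:0) + *m₀   (they have equal Grundy value m₀)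
  have step1 : 0 ≤ ordinalSum (superstar x) 0 + nim (m₀ : Ordinal) := by
    rw [hS0, pg_zero_le]
    set M := PGame.mk (Fin n ⊕ (0 : PGame).LeftMoves) (Fin n ⊕ (0 : PGame).RightMoves)
        (Sum.elim (fun i => nim (x i))
          (fun i => ordinalSum (superstar x) ((0 : PGame).moveLeft i)))
        (Sum.elim (fun i => nim (x i))
          (fun j => ordinalSum (superstar x) ((0 : PGame).moveRight j))) with hM
    intro k
    rcases pg_add_moveRight_cases M _ k with ⟨j, hj⟩ | ⟨j, hj⟩
    · -- Right moves in S:0, to some *x_j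
      rw [hj]
      rcases j with j | j
      · exact nim_pair_lf fun h : x j = m₀ => hm₀_not ⟨j, h⟩
      · exact PEmpty.elim j
    · -- Right moves *m₀ → *m', with m' < m₀, hence m' = x i for some i
      rw [hj]
      obtain ⟨m, hmlt, hmeq⟩ := nim_nat_moveRight m₀ j
      obtain ⟨i, hi⟩ := hm₀_mem m hmlt
      rw [hmeq, pg_zero_lf]
      -- Left answers by moving S:0 → *x_i = *m'
      obtain ⟨k', hk'⟩ := pg_add_moveLeft_inl M (nim (m : Ordinal))
        (Sum.inl i : Fin n ⊕ (0 : PGame).LeftMoves)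
      refine ⟨k', ?_⟩
      rw [hk']
      have : M.moveLeft (Sum.inl i) = nim (x i) := rfl
      rw [this, hi]
      exact nim_pair_le _
  -- Step 2 : 0 ≤ G + *m₀
  have step2 : 0 ≤ ordinalSum (superstar x) 1 + nim (m₀ : Ordinal) := by
    rw [hG, pg_zero_le]
    set M := PGame.mk (Fin n ⊕ (1 : PGame).LeftMoves) (Fin n ⊕ (1 : PGame).RightMoves)
        (Sum.elim (fun i => nim (x i))
          (fun i => ordinalSum (superstar x) ((1 : PGame).moveLeft i)))
        (Sum.elim (fun i => nim (x i))
          (fun j => ordinalSum (superstar x) ((1 : PGame).moveRight j))) with hM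
    intro k
    rcases pg_add_moveRight_cases M _ k with ⟨j, hj⟩ | ⟨j, hj⟩
    · rw [hj]
      rcases j with j | j
      · exact nim_pair_lf fun h : x j = m₀ => hm₀_not ⟨j, h⟩
      · exact PEmpty.elim j
    · rw [hj]
      obtain ⟨m, hmlt, hmeq⟩ := nim_nat_moveRight m₀ j
      obtain ⟨i, hi⟩ := hm₀_mem m hmlt
      rw [hmeq, pg_zero_lf]
      obtain ⟨k', hk'⟩ := pg_add_moveLeft_inl M (nim (m : Ordinal))
        (Sum.inl i : Fin n ⊕ (1 : PGame).LeftMoves)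
      refine ⟨k', ?_⟩
      rw [hk']
      have : M.moveLeft (Sum.inl i) = nim (x i) := rfl
      rw [this, hi]
      exact nim_pair_le _
  -- Step 3 : Left, moving first, wins G + *m for every m : 0 ⧏ G + *m
  have step3 : ∀ m : ℕ, pgLF 0 (ordinalSum (superstar x) 1 + nim (m : Ordinal)) := by
    intro m
    by_cases hmem : m ∈ Set.range x
    · -- match the nimber inside G
      obtain ⟨i, hi⟩ := hmem
      obtain ⟨i', hi'⟩ := pg_moveLeft_of_eq hG (Sum.inl i)
      obtain ⟨k, hk⟩ := pg_add_moveLeft_inl _ (nim (m : Ordinal)) i'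
      rw [pg_zero_lf]
      refine ⟨k, ?_⟩
      rw [hk, hi']
      show 0 ≤ nim (x i : Ordinal) + nim (m : Ordinal)
      rw [hi]
      exact nim_pair_le _
    · rcases eq_or_ne m m₀ with hm | hm
      · -- m = m₀ : move G → S:0
        obtain ⟨i', hi'⟩ := pg_moveLeft_of_eq hG
          (Sum.inr (PUnit.unit : (1 : PGame).LeftMoves) : Fin n ⊕ (1 : PGame).LeftMoves)
        obtain ⟨k, hk⟩ := pg_add_moveLeft_inl _ (nim (m : Ordinal)) i'
        rw [pg_zero_lf]
        refine ⟨k, ?_⟩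
        rw [hk, hi']
        have h0 : ordinalSum (superstar x) ((1 : PGame).moveLeft PUnit.unit)
            = ordinalSum (superstar x) 0 := rfl
        show 0 ≤ ordinalSum (superstar x) ((1 : PGame).moveLeft PUnit.unit) + nim (m : Ordinal)
        rw [h0, hm]
        exact step1
      · -- m ∉ range x, m ≠ m₀ : then m₀ < m, move *m → *m₀
        have hlt : m₀ < m := by
          rcases lt_or_gt_of_ne hm with h | h
          · exact (hmem (hm₀_mem m h)).elim
          · exact h
        rw [pg_zero_lf]
        obtain ⟨i', hi'⟩ := pg_nim_moveLeft (m : Ordinal) m₀ (by exact_mod_cast hlt)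
        obtain ⟨k, hk⟩ := pg_add_moveLeft_inr (ordinalSum (superstar x) 1) _ i'
        refine ⟨k, ?_⟩
        rw [hk, hi']
        exact step2
  -- Conclusion
  show 0 ≤ _ ∧ ¬ _ ≤ 0
  refine ⟨?_, (pg_lf_not_le 0 _).1 (step3 N)⟩
  · rw [hG, pg_zero_le]
    set M := PGame.mk (Fin n ⊕ (1 : PGame).LeftMoves) (Fin n ⊕ (1 : PGame).RightMoves)
        (Sum.elim (fun i => nim (x i))
          (fun i => ordinalSum (superstar x) ((1 : PGame).moveLeft i)))
        (Sum.elim (fun i => nim (x i))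
          (fun j => ordinalSum (superstar x) ((1 : PGame).moveRight j))) with hM
    intro k
    rcases pg_add_moveRight_cases M _ k with ⟨j, hj⟩ | ⟨j, hj⟩
    · rw [hj]
      rcases j with j | j
      · exact nim_pair_lf (hN₁ j).ne
      · exact PEmpty.elim j
    · rw [hj]
      obtain ⟨m, hmlt, hmeq⟩ := nim_nat_moveRight N j
      rw [hmeq]
      rw [← hG]
      exact step3 m
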